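/- For every integer g ≥ 2, the limit as k → ∞ (k ranging over integers ≥ 3) of V_k(g) / k^{8(g-1)} exists and equals 3 · (3/(64π⁶))^{g-1} · S(2(g-1)). -/

import Mathlib

open Finset Filter Topology

/-- The SL₃ Verlinde number
`V_k(g) = (3k²)^{g-1} Σ_{i,j≥1, i+j≤k-1} (8 sin(iπ/k) sin(jπ/k) sin((i+j)π/k))^{-2(g-1)}`. -/
noncomputable def VerlindeSL3 (k g : ℤ) : ℝ :=
  (3 * (k : ℝ) ^ 2) ^ (g - 1) *
    ∑ i ∈ Finset.Icc (1 : ℤ) (k - 1), ∑ j ∈ Finset.Icc (1 : ℤ) (k - 1 - i),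
      (8 * Real.sin (i * Real.pi / k) * Real.sin (j * Real.pi / k) *
        Real.sin ((i + j) * Real.pi / k)) ^ (-2 * (g - 1))

/-- The multiple zeta value `S(m) = Σ_{i,j≥1} (i·j·(i+j))^{-m}`. -/
noncomputable def mzvS (m : ℤ) : ℝ :=
  ∑' (i : ℕ) (j : ℕ),
    (((i : ℝ) + 1) * ((j : ℝ) + 1) * ((i : ℝ) + (j : ℝ) + 2)) ^ (-m)

open Real

/-!
Put `n = 2(g - 1)` and `s_k(i, j) = 8 sin(iπ/k) sin(jπ/k) sin((i + j)π/k)` (`sinTriple k i j`); then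
`V_k(g) / k^{8(g-1)} = 3^{g-1} Σ (k³ s_k(i, j))^{-n}` over the triangle `i, j ≥ 1, i + j ≤ k - 1`.
Since `s_k(i, j)` is the product of the sines of the three "sides" `i`, `j`, `k - i - j`, the
summand is invariant under the rotation `(i, j) ↦ (j, k - i - j)`, so the sum is three times the
sum over the corner square `[1, k/4]²` plus a sum over the points at which at least two sides
exceed `k/4`. At those points Jordan's inequality gives `s_k ≥ 4/k`, so these at most `k²` terms
contribute `O(k^{2-2n}) → 0`. On the corner, `k sin(xπ/k) → xπ` and `k sin(xπ/k) ≥ 2x`, so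
dominated convergence against the summable `(ij(i + j))^{-n}` gives the limit `(8π³)^{-n} S(n)`.
-/

namespace VerlindeSL3

lemma two_div_pi_mul_le_sin {θ t : ℝ} (hθ : 0 ≤ θ) (hθπ : θ ≤ π / 2) (hθt : θ ≤ t)
    (htθ : t ≤ π - θ) : 2 / π * θ ≤ sin t := by
  refine (mul_le_sin hθ hθπ).trans ?_
  rcases le_total t (π / 2) with ht | ht
  · exact sin_le_sin_of_le_of_le_pi_div_two (by linarith) ht hθt
  · rw [← sin_pi_sub t]
    exact sin_le_sin_of_le_of_le_pi_div_two (by linarith) (by linarith) (by linarith)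

lemma two_mul_div_le_sin_mul_pi_div {k a x : ℝ} (hk : 0 < k) (ha : 0 ≤ a) (h2a : 2 * a ≤ k)
    (hax : a ≤ x) (hxa : x ≤ k - a) : 2 * a / k ≤ sin (x * π / k) := by
  have hπ := pi_pos
  calc 2 * a / k = 2 / π * (a * π / k) := by field_simp
    _ ≤ sin (x * π / k) := by
      apply two_div_pi_mul_le_sin (by positivity)
      · rw [div_le_div_iff₀ hk two_pos]; nlinarith
      · gcongr
      · rw [show π - a * π / k = (k - a) * π / k by field_simp]; gcongr

lemma sin_sub_mul_pi_div (k x : ℝ) : sin ((k - x) * π / k) = sin (x * π / k) := by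
  rcases eq_or_ne k 0 with rfl | hk
  · simp
  · rw [show (k - x) * π / k = π - x * π / k by field_simp, sin_pi_sub]

lemma tendsto_mul_sin_mul_pi_div (x : ℝ) :
    Tendsto (fun k : ℝ => k * sin (x * π / k)) atTop (𝓝 (x * π)) := by
  have hsinc : Tendsto (fun k : ℝ => sinc (x * π / k)) atTop (𝓝 1) := by
    rw [← sinc_zero]
    exact (continuous_sinc.tendsto 0).comp (tendsto_const_nhds.div_atTop tendsto_id)
  have h := hsinc.const_mul (x * π)
  rw [mul_one] at h
  refine h.congr' ?_
  filter_upwards [eventually_gt_atTop 0] with k hk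
  rcases eq_or_ne x 0 with rfl | hx
  · simp
  · rw [sinc_of_ne_zero (by positivity)]
    field_simp

noncomputable def sinTriple (k x y : ℝ) : ℝ :=
  8 * sin (x * π / k) * sin (y * π / k) * sin ((x + y) * π / k)

lemma sinTriple_rotate (k x y : ℝ) : sinTriple k y (k - x - y) = sinTriple k x y := by
  have hxy : sin ((k - x - y) * π / k) = sin ((x + y) * π / k) := by
    rw [← sin_sub_mul_pi_div k (x + y)]; ring_nf
  have hx : sin ((y + (k - x - y)) * π / k) = sin (x * π / k) := by
    rw [← sin_sub_mul_pi_div k x]; ring_nf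
  rw [sinTriple, sinTriple, hxy, hx]
  ring

lemma four_div_le_sinTriple_of_quarter_le {k x y : ℝ} (hx : k / 4 ≤ x) (hy : k / 4 ≤ y)
    (hxy : x + y ≤ k - 1) : 4 / k ≤ sinTriple k x y := by
  have hk : 0 < k := by linarith
  have half_le : ∀ z, k / 4 ≤ z → z ≤ k - k / 4 → 1 / 2 ≤ sin (z * π / k) := fun z h₁ h₂ => by
    have := two_mul_div_le_sin_mul_pi_div hk (by positivity) (by linarith) h₁ h₂
    rwa [show 2 * (k / 4) / k = 1 / 2 by field_simp; norm_num] at this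
  have hsx := half_le x hx (by linarith)
  have hsy := half_le y hy (by linarith)
  have hsxy : 2 * 1 / k ≤ sin ((x + y) * π / k) :=
    two_mul_div_le_sin_mul_pi_div hk zero_le_one (by linarith) (by linarith) hxy
  calc 4 / k = 8 * (1 / 2) * (1 / 2) * (2 * 1 / k) := by ring
    _ ≤ sinTriple k x y := by unfold sinTriple; gcongr

lemma four_div_le_sinTriple {k x y : ℝ} (hx : 1 ≤ x) (hy : 1 ≤ y) (hxy : x + y ≤ k - 1)
    (h : k / 4 ≤ x ∧ k / 4 ≤ y ∨ k / 4 ≤ y ∧ k / 4 ≤ k - x - y ∨ k / 4 ≤ k - x - y ∧ k / 4 ≤ x) :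
    4 / k ≤ sinTriple k x y := by
  rcases h with ⟨h₁, h₂⟩ | ⟨h₁, h₂⟩ | ⟨h₁, h₂⟩
  · exact four_div_le_sinTriple_of_quarter_le h₁ h₂ hxy
  · rw [← sinTriple_rotate]
    exact four_div_le_sinTriple_of_quarter_le h₁ h₂ (by linarith)
  · calc 4 / k ≤ sinTriple k (k - x - y) x :=
          four_div_le_sinTriple_of_quarter_le h₁ h₂ (by linarith)
      _ = sinTriple k x y := by
        rw [← sinTriple_rotate k (k - x - y) x, show k - (k - x - y) - x = y by ring]

lemma le_cube_mul_sinTriple {k x y : ℝ} (hx : 0 < x) (hy : 0 < y) (hxy : 2 * (x + y) ≤ k) :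
    x * y * (x + y) ≤ k ^ 3 * sinTriple k x y := by
  have hk : 0 < k := by linarith
  have le_mul_sin : ∀ z, 0 < z → 2 * z ≤ k → z ≤ k * sin (z * π / k) := fun z hz hzk => by
    have := two_mul_div_le_sin_mul_pi_div hk hz.le hzk le_rfl (by linarith)
    rw [div_le_iff₀' hk] at this
    linarith
  have hsx := le_mul_sin x hx (by linarith)
  have hsy := le_mul_sin y hy (by linarith)
  have hsxy := le_mul_sin (x + y) (by positivity) hxy
  calc x * y * (x + y) ≤ 8 * x * y * (x + y) := by
        nlinarith [mul_pos (mul_pos hx hy) (add_pos hx hy)]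
    _ ≤ 8 * (k * sin (x * π / k)) * (k * sin (y * π / k)) * (k * sin ((x + y) * π / k)) := by
        gcongr <;> nlinarith
    _ = k ^ 3 * sinTriple k x y := by unfold sinTriple; ring

lemma tendsto_cube_mul_sinTriple (x y : ℝ) :
    Tendsto (fun k : ℝ => k ^ 3 * sinTriple k x y) atTop (𝓝 (8 * π ^ 3 * (x * y * (x + y)))) := by
  have h := (((tendsto_mul_sin_mul_pi_div x).mul (tendsto_mul_sin_mul_pi_div y)).mul
    (tendsto_mul_sin_mul_pi_div (x + y))).const_mul 8
  rw [show 8 * π ^ 3 * (x * y * (x + y)) = 8 * (x * π * (y * π) * ((x + y) * π)) by ring]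
  refine h.congr fun k => ?_
  unfold sinTriple
  ring

noncomputable def triangle (k : ℤ) : Finset (ℤ × ℤ) :=
  {p ∈ Icc 1 (k - 1) ×ˢ Icc 1 (k - 1) | p.1 + p.2 ≤ k - 1}

lemma mem_triangle {k : ℤ} {p : ℤ × ℤ} :
    p ∈ triangle k ↔ 1 ≤ p.1 ∧ 1 ≤ p.2 ∧ p.1 + p.2 ≤ k - 1 := by
  simp only [triangle, mem_filter, mem_product, mem_Icc]
  omega

lemma sum_Icc_sum_Icc_eq_sum_triangle {M : Type*} [AddCommMonoid M] (k : ℤ) (f : ℤ → ℤ → M) :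
    ∑ i ∈ Icc 1 (k - 1), ∑ j ∈ Icc 1 (k - 1 - i), f i j = ∑ p ∈ triangle k, f p.1 p.2 := by
  rw [triangle, sum_filter, sum_product]
  refine sum_congr rfl fun i hi => ?_
  rw [← sum_filter]
  congr 1
  ext j
  simp only [mem_Icc, mem_filter] at hi ⊢
  omega

lemma card_triangle_le {k : ℤ} (hk : 0 ≤ k) : ((triangle k).card : ℝ) ≤ (k : ℝ) ^ 2 := by
  have hsub : triangle k ⊆ Icc 1 k ×ˢ Icc 1 k := fun p hp => by
    rw [mem_triangle] at hp
    simp only [mem_product, mem_Icc]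
    omega
  have hcard := card_le_card hsub
  rw [card_product, Int.card_Icc, add_sub_cancel_right] at hcard
  calc ((triangle k).card : ℝ) ≤ ((k.toNat * k.toNat : ℕ) : ℝ) := by exact_mod_cast hcard
    _ = (k : ℝ) ^ 2 := by
      rw [Nat.cast_mul, ← Int.cast_natCast, Int.toNat_of_nonneg hk, sq]

@[simps]
def triangleRotation (k : ℤ) : ℤ × ℤ ≃ ℤ × ℤ where
  toFun p := (p.2, k - p.1 - p.2)
  invFun p := (k - p.1 - p.2, p.1)
  left_inv p := Prod.ext (by dsimp; omega) rfl
  right_inv p := Prod.ext rfl (by dsimp; omega)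

noncomputable def corner (k : ℤ) : Finset (ℤ × ℤ) := Icc 1 (k / 4) ×ˢ Icc 1 (k / 4)

noncomputable def middle (k : ℤ) : Finset (ℤ × ℤ) :=
  triangle k \ (corner k ∪ (corner k).map (triangleRotation k).toEmbedding
    ∪ (corner k).map (triangleRotation k).symm.toEmbedding)

lemma mem_middle {k : ℤ} {p : ℤ × ℤ} :
    p ∈ middle k ↔ p ∈ triangle k ∧ (k / 4 < p.1 ∧ k / 4 < p.2 ∨
      k / 4 < p.2 ∧ k / 4 < k - p.1 - p.2 ∨ k / 4 < k - p.1 - p.2 ∧ k / 4 < p.1) := by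
  rw [middle, Finset.mem_sdiff, mem_triangle]
  simp only [corner, mem_union, mem_map_equiv, mem_product, mem_Icc, triangleRotation_apply,
    triangleRotation_symm_apply, Equiv.symm_symm]
  omega

lemma sum_triangle_eq_corner_add_middle {M : Type*} [AddCommMonoid M] (k : ℤ) {f : ℤ × ℤ → M}
    (hf : ∀ p, f (triangleRotation k p) = f p) :
    ∑ p ∈ triangle k, f p = 3 • ∑ p ∈ corner k, f p + ∑ p ∈ middle k, f p := by
  have hf' : ∀ p, f ((triangleRotation k).symm p) = f p := fun p => by
    simpa only [Equiv.apply_symm_apply] using (hf ((triangleRotation k).symm p)).symm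
  have hsub : corner k ∪ (corner k).map (triangleRotation k).toEmbedding
      ∪ (corner k).map (triangleRotation k).symm.toEmbedding ⊆ triangle k := fun p => by
    simp only [corner, mem_union, mem_map_equiv, mem_product, mem_Icc, triangleRotation_apply,
      triangleRotation_symm_apply, Equiv.symm_symm, mem_triangle]
    omega
  have hdisj₁ : Disjoint (corner k) ((corner k).map (triangleRotation k).toEmbedding) := by
    rw [disjoint_left]
    intro p
    simp only [corner, mem_map_equiv, mem_product, mem_Icc, triangleRotation_symm_apply]
    omega
  have hdisj₂ : Disjoint (corner k ∪ (corner k).map (triangleRotation k).toEmbedding)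
      ((corner k).map (triangleRotation k).symm.toEmbedding) := by
    rw [disjoint_left]
    intro p
    simp only [corner, mem_union, mem_map_equiv, mem_product, mem_Icc, triangleRotation_apply,
      triangleRotation_symm_apply, Equiv.symm_symm]
    omega
  rw [middle, ← sum_sdiff hsub, sum_union hdisj₂, sum_union hdisj₁, sum_map, sum_map]
  simp only [Equiv.coe_toEmbedding, hf, hf']
  abel

noncomputable def verlindeTerm (n : ℕ) (k : ℤ) (p : ℤ × ℤ) : ℝ :=
  ((k : ℝ) ^ 3 * sinTriple k p.1 p.2)⁻¹ ^ n

lemma verlindeTerm_rotate (n : ℕ) (k : ℤ) (p : ℤ × ℤ) :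
    verlindeTerm n k (triangleRotation k p) = verlindeTerm n k p := by
  simp only [verlindeTerm, triangleRotation_apply, Int.cast_sub, sinTriple_rotate]

lemma abs_verlindeTerm_le_of_mem_middle (n : ℕ) {k : ℤ} {p : ℤ × ℤ} (hp : p ∈ middle k) :
    |verlindeTerm n k p| ≤ (4 * (k : ℝ) ^ 2)⁻¹ ^ n := by
  rw [mem_middle, mem_triangle] at hp
  have hk : (0 : ℝ) < k := by exact_mod_cast (show 0 < k by omega)
  have quarter_le : ∀ x : ℤ, k / 4 < x → (k : ℝ) / 4 ≤ x := fun x hx => by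
    rw [div_le_iff₀ four_pos]
    exact_mod_cast (show k ≤ x * 4 by omega)
  have hsin : 4 / (k : ℝ) ≤ sinTriple k p.1 p.2 := by
    apply four_div_le_sinTriple (by exact_mod_cast hp.1.1) (by exact_mod_cast hp.1.2.1)
      (by exact_mod_cast hp.1.2.2)
    rcases hp.2 with ⟨h₁, h₂⟩ | ⟨h₁, h₂⟩ | ⟨h₁, h₂⟩
    · exact Or.inl ⟨quarter_le _ h₁, quarter_le _ h₂⟩
    · exact Or.inr (Or.inl ⟨quarter_le _ h₁, by exact_mod_cast quarter_le _ h₂⟩)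
    · exact Or.inr (Or.inr ⟨by exact_mod_cast quarter_le _ h₁, quarter_le _ h₂⟩)
  have hcube : 4 * (k : ℝ) ^ 2 ≤ (k : ℝ) ^ 3 * sinTriple k p.1 p.2 := by
    calc 4 * (k : ℝ) ^ 2 = (k : ℝ) ^ 3 * (4 / k) := by field_simp
      _ ≤ _ := by gcongr
  have hpos : 0 < 4 * (k : ℝ) ^ 2 := by positivity
  have hnonneg : 0 ≤ ((k : ℝ) ^ 3 * sinTriple k p.1 p.2)⁻¹ :=
    inv_nonneg.mpr (hpos.trans_le hcube).le
  rw [verlindeTerm, abs_of_nonneg (pow_nonneg hnonneg n)]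
  exact pow_le_pow_left₀ hnonneg (inv_anti₀ hpos hcube) n

lemma tendsto_sum_middle {n : ℕ} (hn : 2 ≤ n) :
    Tendsto (fun k : ℤ => ∑ p ∈ middle k, verlindeTerm n k p) atTop (𝓝 0) := by
  have hbound : Tendsto (fun k : ℤ => (16 * (k : ℝ) ^ 2)⁻¹) atTop (𝓝 0) :=
    tendsto_inv_atTop_zero.comp (((tendsto_pow_atTop two_ne_zero).comp
      tendsto_intCast_atTop_atTop).const_mul_atTop (by norm_num))
  refine squeeze_zero_norm' ?_ hbound
  filter_upwards [eventually_ge_atTop 1] with k hk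
  have hk' : (1 : ℝ) ≤ k := by exact_mod_cast hk
  have hcard : ((middle k).card : ℝ) ≤ (k : ℝ) ^ 2 :=
    (Nat.cast_le.mpr (card_le_card sdiff_subset)).trans (card_triangle_le (by omega))
  have hinv : (4 * (k : ℝ) ^ 2)⁻¹ ≤ 1 := inv_le_one_of_one_le₀ (by nlinarith)
  calc ‖∑ p ∈ middle k, verlindeTerm n k p‖ ≤ ∑ p ∈ middle k, ‖verlindeTerm n k p‖ :=
        norm_sum_le _ _
    _ ≤ (middle k).card • (4 * (k : ℝ) ^ 2)⁻¹ ^ n :=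
        sum_le_card_nsmul _ _ _ fun p hp => abs_verlindeTerm_le_of_mem_middle n hp
    _ ≤ (k : ℝ) ^ 2 * (4 * (k : ℝ) ^ 2)⁻¹ ^ 2 := by
        rw [nsmul_eq_mul]
        exact mul_le_mul hcard (pow_le_pow_of_le_one (by positivity) hinv hn) (by positivity)
          (by positivity)
    _ = (16 * (k : ℝ) ^ 2)⁻¹ := by field_simp; ring

lemma sum_corner_eq_tsum (k : ℤ) (f : ℤ × ℤ → ℝ) :
    ∑ p ∈ corner k, f p =
      ∑' q : ℕ × ℕ, (corner k : Set (ℤ × ℤ)).indicator f ((q.1 : ℤ) + 1, (q.2 : ℤ) + 1) := by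
  have hinj : Function.Injective fun q : ℕ × ℕ => ((q.1 : ℤ) + 1, (q.2 : ℤ) + 1) :=
    fun q q' h => by simpa [Prod.ext_iff] using h
  rw [hinj.tsum_eq, ← _root_.tsum_subtype, Finset.tsum_subtype']
  intro p hp
  have hp : p ∈ corner k := Set.mem_of_indicator_ne_zero hp
  simp only [corner, mem_product, mem_Icc] at hp
  exact ⟨((p.1 - 1).toNat, (p.2 - 1).toNat), Prod.ext (by simp; omega) (by simp; omega)⟩

lemma tendsto_verlindeTerm (n : ℕ) {x y : ℤ} (hx : 0 < x) (hy : 0 < y) :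
    Tendsto (fun k : ℤ => verlindeTerm n k (x, y)) atTop
      (𝓝 ((8 * π ^ 3 * ((x : ℝ) * y * (x + y)))⁻¹ ^ n)) := by
  have hx' : (0 : ℝ) < x := by exact_mod_cast hx
  have hy' : (0 : ℝ) < y := by exact_mod_cast hy
  exact ((((tendsto_cube_mul_sinTriple x y).comp tendsto_intCast_atTop_atTop).inv₀
    (by positivity)).pow n)

lemma summable_inv_mul_mul_add_pow {n : ℕ} (hn : 2 ≤ n) :
    Summable fun q : ℕ × ℕ =>
      (((q.1 : ℝ) + 1) * ((q.2 : ℝ) + 1) * ((q.1 : ℝ) + 1 + ((q.2 : ℝ) + 1)))⁻¹ ^ n := by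
  have hsq : Summable fun i : ℕ => (((i : ℝ) + 1) ^ 2)⁻¹ := by
    simpa using (summable_nat_add_iff 1).mpr (Real.summable_nat_pow_inv.mpr one_lt_two)
  refine (hsq.mul_of_nonneg hsq (fun _ => by positivity) fun _ => by positivity).of_nonneg_of_le
    (fun _ => by positivity) fun q => ?_
  have ha : (1 : ℝ) ≤ (q.1 : ℝ) + 1 := by simp
  have hb : (1 : ℝ) ≤ (q.2 : ℝ) + 1 := by simp
  set a := (q.1 : ℝ) + 1
  set b := (q.2 : ℝ) + 1
  have hab : 1 ≤ a * b := one_le_mul_of_one_le_of_one_le ha hb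
  calc (a * b * (a + b))⁻¹ ^ n ≤ (a * b * (a + b))⁻¹ ^ 2 := pow_le_pow_of_le_one (by positivity)
        (inv_le_one_of_one_le₀ (one_le_mul_of_one_le_of_one_le hab (by linarith))) hn
    _ ≤ (a * b)⁻¹ ^ 2 := pow_le_pow_left₀ (by positivity)
        (inv_anti₀ (by positivity) (le_mul_of_one_le_right (by positivity) (by linarith))) 2
    _ = (a ^ 2)⁻¹ * (b ^ 2)⁻¹ := by rw [mul_inv, mul_pow, inv_pow, inv_pow]

lemma mzvS_natCast {n : ℕ} (hn : 2 ≤ n) :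
    mzvS n = ∑' q : ℕ × ℕ,
      (((q.1 : ℝ) + 1) * ((q.2 : ℝ) + 1) * ((q.1 : ℝ) + 1 + ((q.2 : ℝ) + 1)))⁻¹ ^ n := by
  rw [(summable_inv_mul_mul_add_pow hn).tsum_prod, mzvS]
  refine tsum_congr fun i => tsum_congr fun j => ?_
  rw [zpow_neg, zpow_natCast, inv_pow]
  ring_nf

lemma tendsto_sum_corner {n : ℕ} (hn : 2 ≤ n) :
    Tendsto (fun k : ℤ => ∑ p ∈ corner k, verlindeTerm n k p) atTop
      (𝓝 ((8 * π ^ 3)⁻¹ ^ n * mzvS n)) := by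
  have hlimit : ∑' q : ℕ × ℕ, (8 * π ^ 3 * (((q.1 : ℝ) + 1) * ((q.2 : ℝ) + 1)
      * ((q.1 : ℝ) + 1 + ((q.2 : ℝ) + 1))))⁻¹ ^ n = (8 * π ^ 3)⁻¹ ^ n * mzvS n := by
    rw [mzvS_natCast hn, ← tsum_mul_left]
    exact tsum_congr fun q => by rw [mul_inv, mul_pow]
  simp_rw [sum_corner_eq_tsum, ← hlimit]
  refine tendsto_tsum_of_dominated_convergence (summable_inv_mul_mul_add_pow hn) (fun q => ?_)
    (Eventually.of_forall fun k q => ?_)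
  · have h := tendsto_verlindeTerm n (x := (q.1 : ℤ) + 1) (y := (q.2 : ℤ) + 1) (by omega) (by omega)
    push_cast at h
    refine h.congr' ?_
    filter_upwards [eventually_ge_atTop (4 * ((q.1 : ℤ) + (q.2 : ℤ) + 1))] with k hk
    rw [Set.indicator_of_mem]
    simp only [corner, coe_product, Set.mem_prod, coe_Icc, Set.mem_Icc]
    omega
  · by_cases hq : ((q.1 : ℤ) + 1, (q.2 : ℤ) + 1) ∈ (corner k : Set (ℤ × ℤ))
    · rw [Set.indicator_of_mem hq]
      simp only [corner, coe_product, Set.mem_prod, coe_Icc, Set.mem_Icc] at hq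
      have hk : 2 * (((q.1 : ℝ) + 1) + ((q.2 : ℝ) + 1)) ≤ k := by
        exact_mod_cast (show 2 * (((q.1 : ℤ) + 1) + ((q.2 : ℤ) + 1)) ≤ k by omega)
      have hle := le_cube_mul_sinTriple (by positivity) (by positivity) hk
      have hpos : 0 < (k : ℝ) ^ 3 * sinTriple k ((q.1 : ℝ) + 1) ((q.2 : ℝ) + 1) :=
        (by positivity : (0 : ℝ) < _).trans_le hle
      rw [verlindeTerm, norm_pow, norm_inv]
      push_cast
      rw [Real.norm_eq_abs, abs_of_pos hpos]
      exact pow_le_pow_left₀ (by positivity) (inv_anti₀ (by positivity) hle) n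
    · rw [Set.indicator_of_notMem hq, norm_zero]
      positivity

lemma tendsto_sum_triangle {n : ℕ} (hn : 2 ≤ n) :
    Tendsto (fun k : ℤ => ∑ p ∈ triangle k, verlindeTerm n k p) atTop
      (𝓝 (3 * ((8 * π ^ 3)⁻¹ ^ n * mzvS n))) := by
  have hsplit : ∀ k : ℤ, 3 * ∑ p ∈ corner k, verlindeTerm n k p + ∑ p ∈ middle k, verlindeTerm n k p
      = ∑ p ∈ triangle k, verlindeTerm n k p := fun k => by
    rw [sum_triangle_eq_corner_add_middle k (verlindeTerm_rotate n k), nsmul_eq_mul, Nat.cast_ofNat]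
  simpa [hsplit] using ((tendsto_sum_corner hn).const_mul 3).add (tendsto_sum_middle hn)

lemma verlindeSL3_div_pow (m : ℕ) {k : ℤ} (hk : k ≠ 0) :
    VerlindeSL3 k (m + 1) / (k : ℝ) ^ (8 * m) =
      3 ^ m * ∑ p ∈ triangle k, verlindeTerm (2 * m) k p := by
  have hexp : -2 * (m : ℤ) = -((2 * m : ℕ) : ℤ) := by push_cast; ring
  have hk' : (k : ℝ) ≠ 0 := by exact_mod_cast hk
  change (3 * (k : ℝ) ^ 2) ^ ((m : ℤ) + 1 - 1) * (∑ i ∈ Icc 1 (k - 1), ∑ j ∈ Icc 1 (k - 1 - i),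
    sinTriple k i j ^ (-2 * ((m : ℤ) + 1 - 1))) / _ = _
  rw [sum_Icc_sum_Icc_eq_sum_triangle k fun i j => sinTriple k i j ^ (-2 * ((m : ℤ) + 1 - 1)),
    add_sub_cancel_right, zpow_natCast, mul_sum, sum_div, mul_sum]
  refine sum_congr rfl fun p _ => ?_
  rw [hexp, zpow_neg, zpow_natCast, verlindeTerm, mul_inv]
  simp only [mul_pow, inv_pow]
  field_simp
  ring

end VerlindeSL3

open VerlindeSL3

theorem verlindeSL3_asymptotics (g : ℤ) (hg : 2 ≤ g) :
    Tendsto (fun k : ℤ => VerlindeSL3 k g / (k : ℝ) ^ (8 * (g - 1))) atTop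
      (𝓝 (3 * (3 / (64 * Real.pi ^ 6)) ^ (g - 1) * mzvS (2 * (g - 1)))) := by
  obtain ⟨m, rfl⟩ : ∃ m : ℕ, g = m + 1 := ⟨(g - 1).toNat, by omega⟩
  have hm : ((m : ℤ) + 1 - 1) = m := add_sub_cancel_right _ _
  have hlimit : 3 ^ m * (3 * ((8 * π ^ 3)⁻¹ ^ (2 * m) * mzvS ((2 * m : ℕ) : ℤ))) =
      3 * (3 / (64 * π ^ 6)) ^ ((m : ℤ) + 1 - 1) * mzvS (2 * ((m : ℤ) + 1 - 1)) := by
    rw [hm, zpow_natCast]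
    push_cast
    rw [pow_mul, div_pow, inv_pow, inv_pow]
    ring
  rw [← hlimit]
  refine ((tendsto_sum_triangle (by omega)).const_mul _).congr' ?_
  filter_upwards [eventually_ne_atTop 0] with k hk
  rw [hm, show 8 * (m : ℤ) = ((8 * m : ℕ) : ℤ) by push_cast; ring, zpow_natCast,
    verlindeSL3_div_pow m hk]
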